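/- The complex plane ℂ admits no regular conformal pseudo-metric with Gauss curvature bounded above by -1; that is, there is no continuous λ : ℂ → [0,∞), not identically zero, C² on {λ > 0}, satisfying Δ(log λ)(z) ≥ λ(z)² at every point where λ(z) > 0. -/

import Mathlib

open Filter Set Topology


/-- The Laplacian of `u : ℂ → ℝ` at `z`: sum of second derivatives in the
real and imaginary coordinate directions. -/
noncomputable def lap (u : ℂ → ℝ) (z : ℂ) : ℝ :=
  iteratedDeriv 2 (fun t : ℝ => u (z + (t : ℂ))) 0 +
    iteratedDeriv 2 (fun t : ℝ => u (z + (t : ℂ) * Complex.I)) 0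


lemma iter2 (f : ℝ → ℝ) : iteratedDeriv 2 f 0 = deriv (deriv f) 0 := by
  rw [iteratedDeriv_succ, iteratedDeriv_one]

lemma exists_open_contDiffOn {f : ℝ → ℝ} (hf : ContDiffAt ℝ 2 f 0) :
    ∃ O : Set ℝ, IsOpen O ∧ (0:ℝ) ∈ O ∧ ContDiffOn ℝ 2 f O := by
  obtain ⟨u, hu, hcd⟩ := hf.contDiffOn le_rfl (by simp)
  obtain ⟨O, hOu, hO, h0⟩ := mem_nhds_iff.mp hu
  exact ⟨O, hO, h0, hcd.mono hOu⟩

lemma second_deriv_test {f : ℝ → ℝ} (hf : ContDiffAt ℝ 2 f 0) (hm : IsLocalMax f 0) :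
    iteratedDeriv 2 f 0 ≤ 0 := by
  by_contra hlt
  push_neg at hlt
  rw [iter2] at hlt
  obtain ⟨O, hO, h0O, hcd⟩ := exists_open_contDiffOn hf
  have hd1 : ContDiffOn ℝ 1 (deriv f) O := hcd.deriv_of_isOpen hO (by norm_num)
  have hderiv0 : deriv f 0 = 0 := hm.deriv_eq_zero
  have hdd : HasDerivAt (deriv f) (deriv (deriv f) 0) 0 :=
    ((hd1.contDiffAt (hO.mem_nhds h0O)).differentiableAt (by norm_num)).hasDerivAt
  have hslope := hasDerivAt_iff_tendsto_slope.mp hdd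
  have h1 : ∀ᶠ t in 𝓝[≠] (0:ℝ), 0 < slope (deriv f) 0 t :=
    hslope.eventually (eventually_gt_nhds hlt)
  have hpos : ∀ᶠ t in 𝓝[>] (0:ℝ), 0 < deriv f t := by
    have h1' : ∀ᶠ t in 𝓝[>] (0:ℝ), 0 < slope (deriv f) 0 t :=
      h1.filter_mono (nhdsWithin_mono 0 (fun x hx => ne_of_gt hx))
    filter_upwards [h1', self_mem_nhdsWithin] with t ht ht0
    have : slope (deriv f) 0 t = deriv f t / t := by
      simp [slope_def_field, hderiv0]
    rw [this] at ht
    have ht0' : (0:ℝ) < t := ht0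
    rcases div_pos_iff.mp ht with ⟨h,_⟩|⟨_,h⟩
    · exact h
    · linarith
  rw [eventually_iff, mem_nhdsGT_iff_exists_Ioc_subset] at hpos
  obtain ⟨δ, hδ, hδsub⟩ := hpos
  obtain ⟨ε, hε0, hεsub⟩ := Metric.eventually_nhds_iff.mp (hm.and (hO.eventually_mem h0O))
  set r := min δ (ε/2) with hr_def
  have hr0 : 0 < r := lt_min hδ (by linarith)
  have hsubO : Icc (0:ℝ) r ⊆ O := by
    intro y hy
    exact (hεsub (by
      rw [Real.dist_eq, sub_zero]
      rw [abs_of_nonneg hy.1]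
      calc y ≤ r := hy.2
        _ ≤ ε/2 := min_le_right _ _
        _ < ε := by linarith)).2
  have hmono : StrictMonoOn f (Icc 0 r) := by
    apply strictMonoOn_of_deriv_pos (convex_Icc 0 r)
    · exact (hcd.continuousOn).mono hsubO
    · intro x hx
      rw [interior_Icc] at hx
      exact hδsub ⟨hx.1, le_trans hx.2.le (min_le_left _ _)⟩
  have hfr : f 0 < f r := hmono ⟨le_refl 0, hr0.le⟩ ⟨hr0.le, le_refl r⟩ hr0
  have : f r ≤ f 0 := (hεsub (by
    rw [Real.dist_eq, sub_zero, abs_of_nonneg hr0.le]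
    calc r ≤ ε/2 := min_le_right _ _
      _ < ε := by linarith)).1
  linarith

lemma iteratedDeriv2_add {F G : ℝ → ℝ} (hF : ContDiffAt ℝ 2 F 0) (hG : ContDiffAt ℝ 2 G 0) :
    iteratedDeriv 2 (fun t => F t + G t) 0 = iteratedDeriv 2 F 0 + iteratedDeriv 2 G 0 := by
  obtain ⟨O1, hO1, h01, hF1⟩ := exists_open_contDiffOn hF
  obtain ⟨O2, hO2, h02, hG1⟩ := exists_open_contDiffOn hG
  have hev : deriv (fun t => F t + G t) =ᶠ[𝓝 (0:ℝ)] fun t => deriv F t + deriv G t := by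
    filter_upwards [hO1.eventually_mem h01, hO2.eventually_mem h02] with t ht1 ht2
    exact deriv_add ((hF1.contDiffAt (hO1.mem_nhds ht1)).differentiableAt (by norm_num))
      ((hG1.contDiffAt (hO2.mem_nhds ht2)).differentiableAt (by norm_num))
  rw [iter2, iter2, iter2, hev.deriv_eq]
  exact deriv_fun_add
    (((hF1.deriv_of_isOpen hO1 (m := 1) (by norm_num)).contDiffAt (hO1.mem_nhds h01)).differentiableAt (by norm_num))
    (((hG1.deriv_of_isOpen hO2 (m := 1) (by norm_num)).contDiffAt (hO2.mem_nhds h02)).differentiableAt (by norm_num))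

lemma log_slice_second (a b c : ℝ) (hs : 0 < c - a^2 - b^2) :
    iteratedDeriv 2 (fun t : ℝ => Real.log (c - (a+t)^2 - b^2)) 0
      = (-2*(c - a^2 - b^2) - 4*a^2) / (c - a^2 - b^2)^2 := by
  have hcont : Continuous (fun t : ℝ => c - (a+t)^2 - b^2) := by continuity
  set U : Set ℝ := {t | 0 < c - (a+t)^2 - b^2} with hU_def
  have hUopen : IsOpen U := isOpen_lt continuous_const hcont
  have h0U : (0:ℝ) ∈ U := by simpa [hU_def] using hs
  have hinner : ∀ t : ℝ, HasDerivAt (fun t : ℝ => c - (a+t)^2 - b^2) (-(2*(a+t))) t := by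
    intro t
    have hA : HasDerivAt (fun t : ℝ => a + t) 1 t := (hasDerivAt_id t).const_add a
    have hA2 : HasDerivAt (fun t : ℝ => (a+t)^2) (2*(a+t)) t := by
      have := hA.fun_pow 2
      norm_num at this
      simpa [mul_comm] using this
    simpa using ((hA2.const_sub c).sub_const (b^2))
  have hev : deriv (fun t : ℝ => Real.log (c - (a+t)^2 - b^2))
      =ᶠ[𝓝 (0:ℝ)] fun t => (-(2*(a+t))) / (c - (a+t)^2 - b^2) := by
    filter_upwards [hUopen.eventually_mem h0U] with t ht
    exact (((hinner t).log (ne_of_gt ht))).deriv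
  rw [iter2, hev.deriv_eq]
  have hnum : HasDerivAt (fun t : ℝ => -(2*(a+t))) (-2) (0:ℝ) := by
    simpa using (((hasDerivAt_id (0:ℝ)).const_add a).const_mul 2).fun_neg
  have hden := hinner 0
  have hs0 : (c - (a+(0:ℝ))^2 - b^2) ≠ 0 := by
    simpa using hs.ne'
  have hq := hnum.fun_div hden hs0
  rw [hq.deriv]
  rw [show a + (0:ℝ) = a by ring]
  field_simp
  ring


lemma key_bound {lam : ℂ → ℝ} (hcont : Continuous lam) (hnn : ∀ z, 0 ≤ lam z)
    (hC2 : ContDiffOn ℝ 2 lam {z | 0 < lam z})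
    (hcurv : ∀ z, 0 < lam z → (lam z) ^ 2 ≤ lap (fun w => Real.log (lam w)) z)
    (R : ℝ) (hR : 0 < R) :
    ∀ z ∈ Metric.closedBall (0:ℂ) R, lam z * (R^2 - Complex.normSq z) ≤ 2*R := by
  set v : ℂ → ℝ := fun z => lam z * (R^2 - Complex.normSq z) with hv_def
  have hvcont : Continuous v := hcont.mul (continuous_const.sub Complex.continuous_normSq)
  obtain ⟨z0, hz0mem, hz0max⟩ := (isCompact_closedBall (0:ℂ) R).exists_isMaxOn
    ⟨0, by simp [hR.le]⟩ hvcont.continuousOn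
  suffices h : v z0 ≤ 2*R by
    intro z hz; exact le_trans (hz0max hz) h
  by_contra hM
  push_neg at hM
  have h2R : (0:ℝ) < 2*R := by linarith
  have hv0pos : 0 < v z0 := lt_trans h2R hM
  have hs0 : 0 < R^2 - Complex.normSq z0 := by
    by_contra h
    push_neg at h
    have : v z0 ≤ 0 := mul_nonpos_of_nonneg_of_nonpos (hnn z0) h
    linarith
  have hlam0 : 0 < lam z0 := by
    rcases (hnn z0).lt_or_eq with h | h
    · exact h
    · exfalso; rw [hv_def] at hv0pos; simp only [← h] at hv0pos; linarith
  have hs0' : 0 < R^2 - z0.re^2 - z0.im^2 := by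
    rw [Complex.normSq_apply] at hs0; nlinarith [hs0]
  have hopen : IsOpen {z : ℂ | 0 < lam z} := isOpen_lt continuous_const hcont
  have hlamAt : ContDiffAt ℝ 2 lam z0 := hC2.contDiffAt (hopen.mem_nhds hlam0)
  have hz0ball : z0 ∈ Metric.ball (0:ℂ) R := by
    rw [Metric.mem_ball, Complex.dist_eq, sub_zero]
    nlinarith [Complex.sq_norm z0, norm_nonneg z0, hs0]
  -- the two slice directions
  set F1 : ℝ → ℝ := fun t => Real.log (lam (z0 + (t:ℂ))) with hF1_def
  set F2 : ℝ → ℝ := fun t => Real.log (lam (z0 + (t:ℂ) * Complex.I)) with hF2_def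
  set G1 : ℝ → ℝ := fun t => Real.log (R^2 - (z0.re + t)^2 - z0.im^2) with hG1_def
  set G2 : ℝ → ℝ := fun t => Real.log (R^2 - (z0.im + t)^2 - z0.re^2) with hG2_def
  have hψ1 : Continuous (fun t : ℝ => z0 + (t:ℂ)) := by continuity
  have hψ2 : Continuous (fun t : ℝ => z0 + (t:ℂ) * Complex.I) := by continuity
  have hψ1c : ContDiff ℝ 2 (fun t : ℝ => z0 + (t:ℂ)) :=
    contDiff_const.add Complex.ofRealCLM.contDiff
  have hψ2c : ContDiff ℝ 2 (fun t : ℝ => z0 + (t:ℂ) * Complex.I) :=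
    contDiff_const.add (Complex.ofRealCLM.contDiff.mul contDiff_const)
  have hF1c : ContDiffAt ℝ 2 F1 0 := by
    have hz : ContDiffAt ℝ 2 lam ((fun t : ℝ => z0 + (t:ℂ)) 0) := by simpa using hlamAt
    have h1 : ContDiffAt ℝ 2 (fun t : ℝ => lam (z0 + (t:ℂ))) 0 :=
      ContDiffAt.comp 0 hz hψ1c.contDiffAt
    exact h1.log (by simpa using hlam0.ne')
  have hF2c : ContDiffAt ℝ 2 F2 0 := by
    have hz : ContDiffAt ℝ 2 lam ((fun t : ℝ => z0 + (t:ℂ) * Complex.I) 0) := by simpa using hlamAt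
    have h1 : ContDiffAt ℝ 2 (fun t : ℝ => lam (z0 + (t:ℂ) * Complex.I)) 0 :=
      ContDiffAt.comp 0 hz hψ2c.contDiffAt
    exact h1.log (by simpa using hlam0.ne')
  have hG1c : ContDiffAt ℝ 2 G1 0 := by
    have hinner : ContDiff ℝ 2 (fun t : ℝ => R^2 - (z0.re + t)^2 - z0.im^2) :=
      (contDiff_const.sub ((contDiff_const.add contDiff_id).pow 2)).sub contDiff_const
    exact hinner.contDiffAt.log (by simpa using hs0'.ne')
  have hG2c : ContDiffAt ℝ 2 G2 0 := by
    have hinner : ContDiff ℝ 2 (fun t : ℝ => R^2 - (z0.im + t)^2 - z0.re^2) :=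
      (contDiff_const.sub ((contDiff_const.add contDiff_id).pow 2)).sub contDiff_const
    exact hinner.contDiffAt.log (by
      have : 0 < R^2 - z0.im^2 - z0.re^2 := by linarith
      simpa using this.ne')
  -- local max of the slices of log v
  have hmax1 : IsLocalMax (fun t => F1 t + G1 t) 0 := by
    have e1 : ∀ᶠ t : ℝ in 𝓝 0, z0 + (t:ℂ) ∈ Metric.ball (0:ℂ) R := by
      apply hψ1.continuousAt.eventually_mem
      apply Metric.isOpen_ball.mem_nhds
      simpa using hz0ball
    have e2 : ∀ᶠ t : ℝ in 𝓝 0, 0 < lam (z0 + (t:ℂ)) := by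
      have hc : ContinuousAt (fun t : ℝ => lam (z0 + (t:ℂ))) 0 :=
        (hcont.comp hψ1).continuousAt
      have hval : 0 < lam (z0 + ((0:ℝ):ℂ)) := by simpa using hlam0
      exact hc.eventually (eventually_gt_nhds hval)
    filter_upwards [e1, e2] with t ht1 ht2
    have hw : z0 + (t:ℂ) ∈ Metric.closedBall (0:ℂ) R := Metric.ball_subset_closedBall ht1
    have hswpos : 0 < R^2 - Complex.normSq (z0 + (t:ℂ)) := by
      rw [Metric.mem_ball, Complex.dist_eq, sub_zero] at ht1
      nlinarith [Complex.sq_norm (z0 + (t:ℂ)), norm_nonneg (z0 + (t:ℂ))]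
    have hG1t : G1 t = Real.log (R^2 - Complex.normSq (z0 + (t:ℂ))) := by
      rw [hG1_def]
      congr 1
      simp [Complex.normSq_apply]
      ring
    have hvw : 0 < v (z0 + (t:ℂ)) := mul_pos ht2 hswpos
    have lhs_eq : F1 t + G1 t = Real.log (v (z0 + (t:ℂ))) := by
      rw [hF1_def, hG1t, ← Real.log_mul ht2.ne' hswpos.ne']
    have rhs_eq : F1 0 + G1 0 = Real.log (v z0) := by
      have hvz0' : v z0 = lam z0 * (R^2 - z0.re^2 - z0.im^2) := by
        rw [hv_def]
        show lam z0 * (R ^ 2 - Complex.normSq z0) = _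
        rw [Complex.normSq_apply]; ring
      rw [hF1_def, hG1_def, hvz0', Real.log_mul hlam0.ne' hs0'.ne']
      simp
    show F1 t + G1 t ≤ F1 0 + G1 0
    rw [lhs_eq, rhs_eq]
    exact (Real.log_le_log_iff hvw hv0pos).mpr (hz0max hw)
  have hmax2 : IsLocalMax (fun t => F2 t + G2 t) 0 := by
    have e1 : ∀ᶠ t : ℝ in 𝓝 0, z0 + (t:ℂ) * Complex.I ∈ Metric.ball (0:ℂ) R := by
      apply hψ2.continuousAt.eventually_mem
      apply Metric.isOpen_ball.mem_nhds
      simpa using hz0ball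
    have e2 : ∀ᶠ t : ℝ in 𝓝 0, 0 < lam (z0 + (t:ℂ) * Complex.I) := by
      have hc : ContinuousAt (fun t : ℝ => lam (z0 + (t:ℂ) * Complex.I)) 0 :=
        (hcont.comp hψ2).continuousAt
      have hval : 0 < lam (z0 + ((0:ℝ):ℂ) * Complex.I) := by simpa using hlam0
      exact hc.eventually (eventually_gt_nhds hval)
    filter_upwards [e1, e2] with t ht1 ht2
    have hw : z0 + (t:ℂ) * Complex.I ∈ Metric.closedBall (0:ℂ) R :=
      Metric.ball_subset_closedBall ht1
    have hswpos : 0 < R^2 - Complex.normSq (z0 + (t:ℂ) * Complex.I) := by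
      rw [Metric.mem_ball, Complex.dist_eq, sub_zero] at ht1
      nlinarith [Complex.sq_norm (z0 + (t:ℂ) * Complex.I),
        norm_nonneg (z0 + (t:ℂ) * Complex.I)]
    have hG2t : G2 t = Real.log (R^2 - Complex.normSq (z0 + (t:ℂ) * Complex.I)) := by
      rw [hG2_def]
      congr 1
      simp [Complex.normSq_apply]
      ring
    have hvw : 0 < v (z0 + (t:ℂ) * Complex.I) := mul_pos ht2 hswpos
    have lhs_eq : F2 t + G2 t = Real.log (v (z0 + (t:ℂ) * Complex.I)) := by
      rw [hF2_def, hG2t, ← Real.log_mul ht2.ne' hswpos.ne']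
    have rhs_eq : F2 0 + G2 0 = Real.log (v z0) := by
      have hvz0' : v z0 = lam z0 * (R^2 - z0.im^2 - z0.re^2) := by
        rw [hv_def]
        show lam z0 * (R ^ 2 - Complex.normSq z0) = _
        rw [Complex.normSq_apply]; ring
      rw [hF2_def, hG2_def, hvz0',
        Real.log_mul hlam0.ne' (by linarith : (0:ℝ) < R^2 - z0.im^2 - z0.re^2).ne']
      simp
    show F2 t + G2 t ≤ F2 0 + G2 0
    rw [lhs_eq, rhs_eq]
    exact (Real.log_le_log_iff hvw hv0pos).mpr (hz0max hw)
  -- second derivative test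
  have ht1 : iteratedDeriv 2 (fun t => F1 t + G1 t) 0 ≤ 0 :=
    second_deriv_test (hF1c.add hG1c) hmax1
  have ht2 : iteratedDeriv 2 (fun t => F2 t + G2 t) 0 ≤ 0 :=
    second_deriv_test (hF2c.add hG2c) hmax2
  rw [iteratedDeriv2_add hF1c hG1c] at ht1
  rw [iteratedDeriv2_add hF2c hG2c] at ht2
  -- explicit second derivatives of the G's
  have hGs1 := log_slice_second z0.re z0.im (R^2) hs0'
  have hGs2 := log_slice_second z0.im z0.re (R^2) (by linarith)
  rw [← hG1_def] at hGs1
  rw [← hG2_def] at hGs2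
  have hsne : (R^2 - z0.re^2 - z0.im^2) ≠ 0 := hs0'.ne'
  have hsne2 : (R^2 - z0.im^2 - z0.re^2) ≠ 0 := by
    intro h; apply hsne; linarith
  have hG12 : iteratedDeriv 2 G1 0 + iteratedDeriv 2 G2 0
      = -(4*R^2)/(R^2 - z0.re^2 - z0.im^2)^2 := by
    rw [hGs1, hGs2]
    field_simp
    ring
  -- curvature hypothesis
  have hlapeq : lap (fun w => Real.log (lam w)) z0
      = iteratedDeriv 2 F1 0 + iteratedDeriv 2 F2 0 := by
    rw [lap, hF1_def, hF2_def]
  have hcurv0 := hcurv z0 hlam0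
  rw [hlapeq] at hcurv0
  have hfinal : (lam z0)^2 ≤ 4*R^2/(R^2 - z0.re^2 - z0.im^2)^2 := by
    have h := hG12
    rw [neg_div] at h
    linarith
  have hsq : (lam z0)^2 * (R^2 - z0.re^2 - z0.im^2)^2 ≤ 4*R^2 := by
    rw [div_eq_mul_inv] at hfinal
    have h2 : (0:ℝ) < (R^2 - z0.re^2 - z0.im^2)^2 := by positivity
    calc (lam z0)^2 * (R^2 - z0.re^2 - z0.im^2)^2
        ≤ (4*R^2 * ((R^2 - z0.re^2 - z0.im^2)^2)⁻¹) * (R^2 - z0.re^2 - z0.im^2)^2 :=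
          mul_le_mul_of_nonneg_right hfinal h2.le
      _ = 4*R^2 := by field_simp
  -- contradiction with v z0 > 2R
  have hvz0 : v z0 = lam z0 * (R^2 - z0.re^2 - z0.im^2) := by
    rw [hv_def]
    show lam z0 * (R ^ 2 - Complex.normSq z0) = _
    rw [Complex.normSq_apply]; ring
  rw [hvz0] at hM
  nlinarith [hM, hsq, mul_pos hlam0 hs0', h2R]

/-- The complex plane admits no regular conformal pseudo-metric with
curvature bounded above by `-1`. -/
theorem no_neg_curved_pseudometric_on_plane :
    ¬∃ lam : ℂ → ℝ, Continuous lam ∧ (∀ z, 0 ≤ lam z) ∧ (¬∀ z, lam z = 0) ∧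
      ContDiffOn ℝ 2 lam {z | 0 < lam z} ∧
      (∀ z, 0 < lam z → (lam z) ^ 2 ≤ lap (fun w => Real.log (lam w)) z) := by
  rintro ⟨lam, hcont, hnn, hnz, hC2, hcurv⟩
  push_neg at hnz
  obtain ⟨z, hz⟩ := hnz
  have hc' : 0 < lam z := lt_of_le_of_ne (hnn z) (Ne.symm hz)
  obtain ⟨c, hc_def⟩ : ∃ c : ℝ, c = lam z := ⟨_, rfl⟩
  obtain ⟨n, hn_def⟩ : ∃ n : ℝ, n = Complex.normSq z := ⟨_, rfl⟩
  have hc : 0 < c := hc_def ▸ hc'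
  have hn0 : 0 ≤ n := hn_def ▸ Complex.normSq_nonneg z
  obtain ⟨R, hR_def⟩ : ∃ R : ℝ, R = n + 1 + 4/c := ⟨_, rfl⟩
  have hd : c * (4/c) = 4 := by field_simp
  have hdpos : 0 < 4/c := by positivity
  have hR : 0 < R := by rw [hR_def]; linarith
  have hmem : z ∈ Metric.closedBall (0:ℂ) R := by
    rw [Metric.mem_closedBall, Complex.dist_eq, sub_zero]
    have habs : ‖z‖^2 = n := by rw [hn_def]; exact Complex.sq_norm z
    nlinarith [norm_nonneg z, hn0, hdpos, sq_nonneg (‖z‖ - 1)]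
  have hb := key_bound hcont hnn hC2 hcurv R hR z hmem
  rw [← hc_def, ← hn_def] at hb
  have e1 : c*(R^2 - n) = c*((n+1)^2 - n) + 8*(n+1) + 4*(4/c) := by
    rw [hR_def]
    field_simp
    ring
  have e2 : 2*R = 2*(n+1) + 2*(4/c) := by rw [hR_def]; ring
  have hnn2 : 0 ≤ c*((n+1)^2 - n) := mul_nonneg hc.le (by nlinarith [hn0])
  linarith [hb, e1, e2, hnn2, hdpos, hn0]
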